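/- For every integer m ≥ 1 and every integer h with h ≤ ⌊m²/2⌋ + ⌊m/2⌋, one has q_{m+1,m}(h) ≤ q_{m+1,m}(h − 2) + 4 in ℤ ∪ {+∞}. -/

import Mathlib

open Classical in
/-- The quantum lower bound function `q_{n,n}` for the Khovanov homology of `T(n,n)`:
`+∞` outside `[0, ⌊n²/2⌋]`, `n² - 2n` at `h = 0`, and `n² + 2⌈h/2⌉ - 2p` for
`2(p+1)(q-1) < h ≤ 2pq` where `p ≥ q ≥ 1`, `p + q = n` (with `q = n - p`). -/
noncomputable def qnn (n h : ℤ) : WithTop ℤ :=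
  if h < 0 ∨ n ^ 2 / 2 < h then ⊤
  else if h = 0 then ((n ^ 2 - 2 * n : ℤ) : WithTop ℤ)
  else if hc : ∃ p : ℤ, n - p ≤ p ∧ 1 ≤ n - p ∧
      2 * (p + 1) * (n - p - 1) < h ∧ h ≤ 2 * p * (n - p)
    then ((n ^ 2 + 2 * ((h + 1) / 2) - 2 * hc.choose : ℤ) : WithTop ℤ)
  else ⊤

open Classical in
/-- The quantum lower bound function `q_{n+1,n}` for the Khovanov homology of `T(n+1,n)`:
`+∞` outside `[0, ⌊n²/2⌋ + ⌊n/2⌋]`; `q_{n,n}(h) + n - 3` at `h = 2pq + 1 ≤ ⌊n²/2⌋`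
(`p ≥ q ≥ 1`, `p + q = n`); `q_{n,n}(h) + n - 1` at other `h` with `0 ≤ h ≤ ⌊n²/2⌋`;
and `⌊n²/2⌋ + 2h - 1` for `⌊n²/2⌋ ≤ h ≤ ⌊n²/2⌋ + ⌊n/2⌋`. -/
noncomputable def qn1n (n h : ℤ) : WithTop ℤ :=
  if h < 0 ∨ n ^ 2 / 2 + n / 2 < h then ⊤
  else if ∃ p : ℤ, n - p ≤ p ∧ 1 ≤ n - p ∧ h = 2 * p * (n - p) + 1 ∧ h ≤ n ^ 2 / 2
    then qnn n h + ((n - 3 : ℤ) : WithTop ℤ)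
  else if h ≤ n ^ 2 / 2 then qnn n h + ((n - 1 : ℤ) : WithTop ℤ)
  else ((n ^ 2 / 2 + 2 * h - 1 : ℤ) : WithTop ℤ)

/-! Within a block `(2(p+1)(q-1), 2pq]` the values of `q_{m,m}` grow by `2` every two steps,
and passing to the next block (lower `p`) adds another `2`; since every block has at least two
points, `q_{m,m}(h) ≤ q_{m,m}(h - 2) + 4`. The correction `m - 3` instead of `m - 1` sits at the
first point of every block but the lowest. It could only break the bound if `h - 2` is such a
point and `h` is not; but then `h - 2` and `h` lie in the same block (a block of length `2` is
followed by another corrected point), where the growth is only `2`. Above `⌊m²/2⌋` the function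
is linear of slope `2`, and the two transition points are checked directly. -/

def InBlock (n p h : ℤ) : Prop :=
  n - p ≤ p ∧ 1 ≤ n - p ∧ 2 * (p + 1) * (n - p - 1) < h ∧ h ≤ 2 * p * (n - p)

/-- The points `2pq + 1 ≤ ⌊n²/2⌋` are exactly the first points of all blocks except the lowest. -/
def IsBlockStart (n h : ℤ) : Prop :=
  ∃ p : ℤ, n - p ≤ p ∧ 1 ≤ n - p ∧ h = 2 * p * (n - p) + 1 ∧ h ≤ n ^ 2 / 2

lemma Int.sq_ediv_two (n : ℤ) : n ^ 2 / 2 = 2 * (n - n / 2) * (n / 2) := by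
  rcases Int.even_or_odd' n with ⟨k, rfl | rfl⟩
  · rw [show (2 * k) ^ 2 = 2 * k ^ 2 * 2 by ring]
    simp only [Int.mul_ediv_cancel _ two_ne_zero, Int.mul_ediv_cancel_left _ two_ne_zero]
    ring
  · rw [show (2 * k + 1) ^ 2 = 1 + (2 * k ^ 2 + 2 * k) * 2 by ring,
      Int.add_mul_ediv_right _ _ two_ne_zero, show (2 * k + 1) / 2 = k by omega]
    ring

lemma Int.two_mul_sq_ediv_two (n : ℤ) : 2 * (n ^ 2 / 2) = n ^ 2 - n % 2 := by
  have hr : n % 2 * (n % 2) = n % 2 := by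
    rcases Int.emod_two_eq_zero_or_one n with hr | hr <;> simp [hr]
  rw [Int.sq_ediv_two]
  linear_combination (n - 2 * (n / 2) + n % 2) * Int.mul_ediv_add_emod n 2 - hr

section Blocks

variable {n p h : ℤ}

lemma InBlock.pos (hp : InBlock n p h) : 0 < h := by
  obtain ⟨hqp, hq, hlo, -⟩ := hp
  nlinarith

lemma InBlock.le_sq_ediv_two (hp : InBlock n p h) : h ≤ n ^ 2 / 2 := by
  have := hp.2.2.2
  exact (Int.le_ediv_iff_mul_le two_pos).2 (by nlinarith [sq_nonneg (n - 2 * p)])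

lemma InBlock.unique {p' : ℤ} (hp : InBlock n p h) (hp' : InBlock n p' h) : p = p' := by
  obtain ⟨a, b, c, d⟩ := hp
  obtain ⟨a', b', c', d'⟩ := hp'
  by_contra hne
  rcases lt_or_gt_of_ne hne with hlt | hlt
  · nlinarith [mul_nonneg (by omega : (0:ℤ) ≤ p' - p - 1) (by omega : (0:ℤ) ≤ p' + p + 1 - n)]
  · nlinarith [mul_nonneg (by omega : (0:ℤ) ≤ p - p' - 1) (by omega : (0:ℤ) ≤ p + p' + 1 - n)]

/-- Every block has at least two points. -/
lemma InBlock.le_add_one_of_sub_two {p' : ℤ} (hp : InBlock n p h) (hp' : InBlock n p' (h - 2)) :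
    p' ≤ p + 1 := by
  obtain ⟨hqp, -, hlo, -⟩ := hp
  obtain ⟨-, -, -, hhi'⟩ := hp'
  by_contra! hlt
  have hgap : 1 ≤ (p' - p - 1) * (p + 1 + p' - n) :=
    one_le_mul_of_one_le_of_one_le (by omega) (by omega)
  nlinarith

lemma exists_inBlock (hn : 0 ≤ n) (h0 : 0 < h) (hM : h ≤ n ^ 2 / 2) : ∃ p, InBlock n p h := by
  obtain ⟨p, ⟨hp1, hp2⟩, hmax⟩ := Int.exists_greatest_of_bdd
    (P := fun p => n ≤ 2 * p ∧ h ≤ 2 * p * (n - p))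
    ⟨n, fun z ⟨hz, hzh⟩ => by by_contra! hgt; nlinarith⟩
    ⟨n - n / 2, by omega, by rw [Int.sq_ediv_two] at hM; convert hM using 2; ring⟩
  refine ⟨p, by omega, ?_, ?_, hp2⟩
  · by_contra! hq
    nlinarith
  · by_contra! hle
    have := hmax (p + 1) ⟨by omega, by nlinarith⟩
    omega

lemma inBlock_sub_half (hn : 2 ≤ n) (hlo : n ^ 2 / 2 - 2 < h) (hhi : h ≤ n ^ 2 / 2) :
    InBlock n (n - n / 2) h := by
  have hM := Int.sq_ediv_two n
  refine ⟨by omega, by omega, ?_, ?_⟩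
  · have : 2 * (n - n / 2 + 1) * (n - (n - n / 2) - 1)
        = 2 * (n - n / 2) * (n / 2) - 2 * (n - n / 2 - n / 2 + 1) := by ring
    omega
  · rw [hM] at hhi; convert hhi using 1; ring

lemma IsBlockStart.odd (hs : IsBlockStart n h) : Odd h := by
  obtain ⟨p, -, -, rfl, -⟩ := hs
  exact ⟨p * (n - p), by ring⟩

lemma IsBlockStart.isBlockStart_add_two_or_inBlock (hs : IsBlockStart n h)
    (hM : h + 2 ≤ n ^ 2 / 2) :
    IsBlockStart n (h + 2) ∨ ∃ p, InBlock n p h ∧ InBlock n p (h + 2) := by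
  obtain ⟨p, hqp, hq, rfl, -⟩ := hs
  have hnext : 2 * (p - 1) * (n - (p - 1)) = 2 * p * (n - p) + 2 * (2 * p - n - 1) := by ring
  have hprev : 2 * (p - 1 + 1) * (n - (p - 1) - 1) = 2 * p * (n - p) := by ring
  -- `2pq = ⌊n²/2⌋` when `2p ≤ n + 1`, so the bound `2pq + 1 ≤ ⌊n²/2⌋` forces `2p ≥ n + 2`.
  have hp : n + 2 ≤ 2 * p := by
    by_contra! hlt
    have htop : n / 2 = n - p := by omega
    rw [Int.sq_ediv_two, htop, show n - (n - p) = p by ring] at hM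
    linarith
  rcases hp.eq_or_lt with hp | hp
  · exact .inl ⟨p - 1, by omega, by omega, by linarith, by linarith⟩
  · exact .inr ⟨p - 1, ⟨by omega, by omega, by linarith, by linarith⟩,
      ⟨by omega, by omega, by linarith, by linarith⟩⟩

end Blocks

section Values

variable {n p h : ℤ}

lemma qnn_zero : qnn n 0 = ((n ^ 2 - 2 * n : ℤ) : WithTop ℤ) := by
  have : 0 ≤ n ^ 2 / 2 := Int.ediv_nonneg (sq_nonneg n) zero_le_two
  rw [qnn, if_neg (by omega), if_pos rfl]

lemma qnn_of_inBlock (hp : InBlock n p h) :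
    qnn n h = ((n ^ 2 + 2 * ((h + 1) / 2) - 2 * p : ℤ) : WithTop ℤ) := by
  have hex : ∃ p, n - p ≤ p ∧ 1 ≤ n - p ∧ 2 * (p + 1) * (n - p - 1) < h ∧ h ≤ 2 * p * (n - p) :=
    ⟨p, hp⟩
  have := hp.pos
  have := hp.le_sq_ediv_two
  rw [qnn, if_neg (by omega), if_neg (by omega), dif_pos hex, InBlock.unique hex.choose_spec hp]

lemma qn1n_of_neg (hh : h < 0) : qn1n n h = ⊤ := by
  rw [qn1n, if_pos (.inl hh)]

open Classical in
lemma qn1n_of_le_sq_ediv_two (hn : 0 ≤ n) (h0 : 0 ≤ h) (hM : h ≤ n ^ 2 / 2) :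
    qn1n n h = qnn n h + ((n - if IsBlockStart n h then 3 else 1 : ℤ) : WithTop ℤ) := by
  rw [qn1n, if_neg (by omega)]
  unfold IsBlockStart
  split_ifs <;> simp_all

lemma qn1n_zero (hn : 0 ≤ n) : qn1n n 0 = ((n ^ 2 - n - 1 : ℤ) : WithTop ℤ) := by
  have : 0 ≤ n ^ 2 / 2 := Int.ediv_nonneg (sq_nonneg n) zero_le_two
  have hs : ¬ IsBlockStart n 0 := fun hs => by have := Int.odd_iff.mp hs.odd; omega
  rw [qn1n_of_le_sq_ediv_two hn le_rfl this, qnn_zero, if_neg hs]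
  norm_cast
  ring

open Classical in
lemma qn1n_of_inBlock (hp : InBlock n p h) :
    qn1n n h = ((n ^ 2 + 2 * ((h + 1) / 2) - 2 * p + n - if IsBlockStart n h then 3 else 1 : ℤ)
      : WithTop ℤ) := by
  have := hp.pos
  rw [qn1n_of_le_sq_ediv_two (by have := hp.1; have := hp.2.1; omega) this.le hp.le_sq_ediv_two,
    qnn_of_inBlock hp]
  norm_cast
  ring

lemma qn1n_of_sq_ediv_two_lt (hM : n ^ 2 / 2 < h) (hh : h ≤ n ^ 2 / 2 + n / 2) :
    qn1n n h = ((n ^ 2 / 2 + 2 * h - 1 : ℤ) : WithTop ℤ) := by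
  have : 0 ≤ n ^ 2 / 2 := Int.ediv_nonneg (sq_nonneg n) zero_le_two
  rw [qn1n, if_neg (by omega), if_neg fun ⟨_, _, _, _, hle⟩ => by omega, if_neg (by omega)]

end Values

section StepTwo

variable {m h : ℤ}

lemma qn1n_le_qn1n_sub_two_add_four_of_le (hm : 1 ≤ m) (h2 : 2 ≤ h) (hM : h ≤ m ^ 2 / 2) :
    qn1n m h ≤ qn1n m (h - 2) + ((4 : ℤ) : WithTop ℤ) := by
  obtain ⟨p, hp⟩ := exists_inBlock (by omega) (by omega) hM
  rw [qn1n_of_inBlock hp]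
  rcases h2.eq_or_lt with rfl | h3
  · have hpm : p = m - 1 := by
      obtain ⟨hqp, hq, hlo, -⟩ := hp
      by_contra
      have : 1 ≤ m - p - 1 := by omega
      nlinarith
    rw [show (2 : ℤ) - 2 = 0 by norm_num, qn1n_zero (by omega)]
    norm_cast
    split_ifs with hs
    · have := Int.odd_iff.mp hs.odd; omega
    · omega
  obtain ⟨p', hp'⟩ := exists_inBlock (by omega) (by omega) (by omega : h - 2 ≤ m ^ 2 / 2)
  have hle := hp.le_add_one_of_sub_two hp'
  rw [qn1n_of_inBlock hp']
  norm_cast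
  split_ifs with hs hs' hs'
  · omega
  · omega
  · rcases hs'.isBlockStart_add_two_or_inBlock (by omega) with hs'' | ⟨q, hq', hq⟩
    · rw [sub_add_cancel] at hs''
      exact absurd hs'' hs
    · rw [sub_add_cancel] at hq
      have := hp'.unique hq'
      have := hq.unique hp
      omega
  · omega

lemma qn1n_le_qn1n_sub_two_add_four_of_lt (hM : m ^ 2 / 2 < h) (hmax : h ≤ m ^ 2 / 2 + m / 2) :
    qn1n m h ≤ qn1n m (h - 2) + ((4 : ℤ) : WithTop ℤ) := by
  rw [qn1n_of_sq_ediv_two_lt hM hmax]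
  rcases lt_or_ge (m ^ 2 / 2) (h - 2) with hM' | hM'
  · rw [qn1n_of_sq_ediv_two_lt hM' (by omega)]
    norm_cast
    omega
  have hm : 2 ≤ m := by omega
  have hM2 : 2 ≤ m ^ 2 / 2 := by
    have : 4 ≤ m ^ 2 := by nlinarith
    omega
  have hp := inBlock_sub_half hm (by omega : m ^ 2 / 2 - 2 < h - 2) hM'
  have heven : m ^ 2 / 2 % 2 = 0 := by
    rw [Int.sq_ediv_two, mul_assoc]
    exact Int.mul_emod_right _ _
  have := Int.two_mul_sq_ediv_two m
  rw [qn1n_of_inBlock hp]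
  norm_cast
  split_ifs with hs
  · have := Int.odd_iff.mp hs.odd
    omega
  · omega

end StepTwo

/-- Equation (f) of Lemma 5.3: for `m ≥ 1` and every integer `h` with
`h ≤ ⌊m²/2⌋ + ⌊m/2⌋`, `q_(m+1,m)(h) ≤ q_(m+1,m)(h - 2) + 4`. -/
theorem qn1n_step_two (m : ℤ) (hm : 1 ≤ m) (h : ℤ)
    (hmax : h ≤ m ^ 2 / 2 + m / 2) :
    qn1n m h ≤ qn1n m (h - 2) + ((4 : ℤ) : WithTop ℤ) := by
  rcases lt_or_ge (h - 2) 0 with hlow | hlow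
  · simp [qn1n_of_neg hlow]
  rcases le_or_gt h (m ^ 2 / 2) with hM | hM
  · exact qn1n_le_qn1n_sub_two_add_four_of_le hm (by omega) hM
  · exact qn1n_le_qn1n_sub_two_add_four_of_lt hM hmax
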